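/- arXiv:2403.16174 — 3 statements merged into one kernel-verified Lean document; each statement's English description precedes it below -/
import Mathlib

section
/- Under the CFL-type condition (1/3) h_t² (a_1²/h_1² + ... + a_n²/h_n²) ≤ (1-ε) ρ_min with 0 ≤ ε < 1, the operator I_{ρh} := ρ^{-1} I + (h_t²/12)(ρ^{-1} L_h)(ρ^{-1} I) is self-adjoint and satisfies ε ρ̄^{-1} I ≤ ε ρ^{-1} I < I_{ρh} < ρ^{-1} I ≤ ρ_min^{-1} I, where ρ^{-1} I denotes pointwise multiplication by 1/ρ(x). -/
/-!
Write `u = ρ⁻¹ w`. Since `ρ⁻¹ I` is self-adjoint, `⟪I_{ρh} w, w⟫ = ⟪ρ⁻¹ w, w⟫ + (h_t²/12) ⟪L_h u, u⟫`,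
and the upper bound is the negativity of `L_h`. For the lower bound,
`-⟪L_h u, u⟫ < 4 (∑ aₖ²/hₖ²) ‖u‖²` and `‖u‖² ≤ ρ_min⁻¹ ⟪ρ⁻¹ w, w⟫`, so the correction term is
smaller than `(h_t²/3)(∑ aₖ²/hₖ²) ρ_min⁻¹ ⟪ρ⁻¹ w, w⟫ ≤ (1 - ε) ⟪ρ⁻¹ w, w⟫` by the CFL condition.
-/

open RealInnerProductSpace

section Sandwich

variable {E : Type*} [NormedAddCommGroup E] [InnerProductSpace ℝ E] {M L : E →ₗ[ℝ] E}

theorem LinearMap.IsSymmetric.add_smul_sandwich (hM : M.IsSymmetric) (hL : L.IsSymmetric)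
    (c : ℝ) : (M + c • (M ∘ₗ L ∘ₗ M)).IsSymmetric := by
  refine hM.add (LinearMap.IsSymmetric.smul (conj_trivial c) fun v w => ?_)
  simp only [LinearMap.comp_apply]
  rw [hM, hL, hM]

theorem LinearMap.IsSymmetric.inner_add_smul_sandwich_self (hM : M.IsSymmetric) (c : ℝ)
    (w : E) : ⟪(M + c • (M ∘ₗ L ∘ₗ M)) w, w⟫ = ⟪M w, w⟫ + c * ⟪L (M w), M w⟫ := by
  simp only [LinearMap.add_apply, LinearMap.smul_apply, LinearMap.comp_apply]
  rw [inner_add_left, real_inner_smul_left, hM (L (M w)) w]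

theorem LinearMap.IsSymmetric.inner_add_smul_sandwich_self_mem_Ioo (hM : M.IsSymmetric)
    {c K κ ε : ℝ} (hc : 0 < c) (hκ : 0 ≤ κ) (hcKκ : c * K * κ ≤ 1 - ε)
    (hL : ∀ u, u ≠ 0 → 0 < -⟪L u, u⟫ ∧ -⟪L u, u⟫ < K * ⟪u, u⟫)
    {w : E} (hw : M w ≠ 0) (hMw : ⟪M w, M w⟫ ≤ κ * ⟪M w, w⟫) :
    ⟪(M + c • (M ∘ₗ L ∘ₗ M)) w, w⟫ ∈ Set.Ioo (ε * ⟪M w, w⟫) ⟪M w, w⟫ := by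
  rw [hM.inner_add_smul_sandwich_self, Set.mem_Ioo]
  obtain ⟨hneg, hbound⟩ := hL (M w) hw
  have hpos : 0 < ⟪M w, M w⟫ := real_inner_self_pos.mpr hw
  have hK : 0 ≤ c * K := by nlinarith
  have hm : 0 ≤ ⟪M w, w⟫ := by nlinarith
  have hcorr : c * -⟪L (M w), M w⟫ < (1 - ε) * ⟪M w, w⟫ :=
    calc c * -⟪L (M w), M w⟫ < c * K * ⟪M w, M w⟫ := by
          rw [mul_assoc]; exact mul_lt_mul_of_pos_left hbound hc
      _ ≤ c * K * (κ * ⟪M w, w⟫) := mul_le_mul_of_nonneg_left hMw hK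
      _ = c * K * κ * ⟪M w, w⟫ := by ring
      _ ≤ (1 - ε) * ⟪M w, w⟫ := mul_le_mul_of_nonneg_right hcKκ hm
  constructor <;> nlinarith

end Sandwich

section PointwiseDiv

variable {ι : Type*} {ρ : ι → ℝ} {M : EuclideanSpace ℝ ι →ₗ[ℝ] EuclideanSpace ℝ ι}

theorem apply_ne_zero_of_apply_eq_div (hM : ∀ w i, M w i = w i / ρ i) (hρ : ∀ i, 0 < ρ i)
    {w : EuclideanSpace ℝ ι} (hw : w ≠ 0) : M w ≠ 0 := by
  contrapose! hw
  ext i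
  have hi : M w i = 0 := by rw [hw]; rfl
  rwa [hM, div_eq_zero_iff, or_iff_left (hρ i).ne'] at hi

variable [Fintype ι]

theorem EuclideanSpace.real_inner_eq_sum (v w : EuclideanSpace ℝ ι) :
    ⟪v, w⟫ = ∑ i, v i * w i := by
  simp only [PiLp.inner_apply, RCLike.inner_apply, conj_trivial, mul_comm]

theorem inner_apply_eq_sum_div (hM : ∀ w i, M w i = w i / ρ i) (v w : EuclideanSpace ℝ ι) :
    ⟪M v, w⟫ = ∑ i, v i * w i / ρ i := by
  simp only [EuclideanSpace.real_inner_eq_sum, hM, div_mul_eq_mul_div]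

theorem isSymmetric_of_apply_eq_div (hM : ∀ w i, M w i = w i / ρ i) : M.IsSymmetric := by
  intro v w
  rw [inner_apply_eq_sum_div hM, EuclideanSpace.real_inner_eq_sum]
  simp only [hM, mul_div_assoc]

theorem one_div_mul_inner_self_le_inner_apply (hM : ∀ w i, M w i = w i / ρ i) {ρbar : ℝ}
    (hρ : ∀ i, 0 < ρ i) (hρbar : ∀ i, ρ i ≤ ρbar) (w : EuclideanSpace ℝ ι) :
    1 / ρbar * ⟪w, w⟫ ≤ ⟪M w, w⟫ := by
  rw [inner_apply_eq_sum_div hM, EuclideanSpace.real_inner_eq_sum, Finset.mul_sum]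
  refine Finset.sum_le_sum fun i _ => ?_
  rw [one_div_mul_eq_div]
  exact div_le_div_of_nonneg_left (mul_self_nonneg _) (hρ i) (hρbar i)

theorem inner_apply_le_one_div_mul_inner_self (hM : ∀ w i, M w i = w i / ρ i) {ρmin : ℝ}
    (hρmin : 0 < ρmin) (hρ : ∀ i, ρmin ≤ ρ i) (w : EuclideanSpace ℝ ι) :
    ⟪M w, w⟫ ≤ 1 / ρmin * ⟪w, w⟫ := by
  rw [inner_apply_eq_sum_div hM, EuclideanSpace.real_inner_eq_sum, Finset.mul_sum]
  refine Finset.sum_le_sum fun i _ => ?_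
  rw [one_div_mul_eq_div]
  exact div_le_div_of_nonneg_left (mul_self_nonneg _) hρmin (hρ i)

theorem inner_apply_apply_le_one_div_mul_inner_apply (hM : ∀ w i, M w i = w i / ρ i)
    {ρmin : ℝ} (hρmin : 0 < ρmin) (hρ : ∀ i, ρmin ≤ ρ i) (w : EuclideanSpace ℝ ι) :
    ⟪M w, M w⟫ ≤ 1 / ρmin * ⟪M w, w⟫ := by
  rw [real_inner_comm, inner_apply_eq_sum_div hM, inner_apply_eq_sum_div hM, Finset.mul_sum]
  refine Finset.sum_le_sum fun i _ => ?_
  rw [one_div_mul_eq_div, hM]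
  have hi : 0 ≤ w i * w i / ρ i := div_nonneg (mul_self_nonneg _) (hρmin.trans_le (hρ i)).le
  calc w i * (w i / ρ i) / ρ i = w i * w i / ρ i / ρ i := by ring
    _ ≤ w i * w i / ρ i / ρmin := div_le_div_of_nonneg_left hi hρmin (hρ i)

end PointwiseDiv

theorem stmt_5_general (d n : ℕ)
    (a h : Fin n → ℝ)
    (ht ε ρmin ρbar : ℝ) (hht : 0 < ht) (hε0 : 0 ≤ ε)
    (hρmin : 0 < ρmin)
    (ρ : Fin d → ℝ) (hρ : ∀ i, ρmin ≤ ρ i ∧ ρ i ≤ ρbar)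
    (L : EuclideanSpace ℝ (Fin d) →ₗ[ℝ] EuclideanSpace ℝ (Fin d))
    (hLsa : ∀ v w, ⟪L v, w⟫ = ⟪v, L w⟫)
    (hLbnd : ∀ w, w ≠ 0 → 0 < -⟪L w, w⟫ ∧
      -⟪L w, w⟫ < 4 * (∑ k, (a k) ^ 2 / (h k) ^ 2) * ⟪w, w⟫)
    (Minv : EuclideanSpace ℝ (Fin d) →ₗ[ℝ] EuclideanSpace ℝ (Fin d))
    (hMinv : ∀ (w : EuclideanSpace ℝ (Fin d)) (i : Fin d), Minv w i = w i / ρ i)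
    (hCFL : (1 / 3) * ht ^ 2 * (∑ k, (a k) ^ 2 / (h k) ^ 2) ≤ (1 - ε) * ρmin)
    (Iρh : EuclideanSpace ℝ (Fin d) →ₗ[ℝ] EuclideanSpace ℝ (Fin d))
    (hIρh : Iρh = Minv + (ht ^ 2 / 12) • (Minv ∘ₗ L ∘ₗ Minv)) :
    (∀ v w, ⟪Iρh v, w⟫ = ⟪v, Iρh w⟫) ∧
    ∀ w, w ≠ 0 →
      ε * (1 / ρbar) * ⟪w, w⟫ ≤ ε * ⟪Minv w, w⟫ ∧
      ε * ⟪Minv w, w⟫ < ⟪Iρh w, w⟫ ∧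
      ⟪Iρh w, w⟫ < ⟪Minv w, w⟫ ∧
      ⟪Minv w, w⟫ ≤ (1 / ρmin) * ⟪w, w⟫ := by
  have hρpos : ∀ i, 0 < ρ i := fun i => hρmin.trans_le (hρ i).1
  have hMsymm : Minv.IsSymmetric := isSymmetric_of_apply_eq_div hMinv
  have hcoeff : ht ^ 2 / 12 * (4 * ∑ k, a k ^ 2 / h k ^ 2) * (1 / ρmin) ≤ 1 - ε := by
    rw [mul_one_div, div_le_iff₀ hρmin]
    linarith
  subst hIρh
  refine ⟨hMsymm.add_smul_sandwich hLsa _, fun w hw => ?_⟩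
  obtain ⟨hlower, hupper⟩ := hMsymm.inner_add_smul_sandwich_self_mem_Ioo (by positivity)
    (one_div_nonneg.mpr hρmin.le) hcoeff hLbnd (apply_ne_zero_of_apply_eq_div hMinv hρpos hw)
    (inner_apply_apply_le_one_div_mul_inner_apply hMinv hρmin (fun i => (hρ i).1) w)
  refine ⟨?_, hlower, hupper,
    inner_apply_le_one_div_mul_inner_self hMinv hρmin (fun i => (hρ i).1) w⟩
  rw [mul_assoc]
  exact mul_le_mul_of_nonneg_left
    (one_div_mul_inner_self_le_inner_apply hMinv hρpos (fun i => (hρ i).2) w) hε0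

/-- under the CFL-type condition
`(1/3) h_t² ∑ aₖ²/hₖ² ≤ (1-ε) ρ_min`, the operator
`I_{ρh} = ρ⁻¹ I + (h_t²/12)(ρ⁻¹ L_h)(ρ⁻¹ I)` is self-adjoint and satisfies
`ε ρ̄⁻¹ I ≤ ε ρ⁻¹ I < I_{ρh} < ρ⁻¹ I ≤ ρ_min⁻¹ I`. -/
theorem stmt_5 (d n : ℕ) (hd : 0 < d)
    (a h : Fin n → ℝ) (ha : ∀ k, 0 < a k) (hh : ∀ k, 0 < h k)
    (ht ε ρmin ρbar : ℝ) (hht : 0 < ht) (hε0 : 0 ≤ ε) (hε1 : ε < 1)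
    (hρmin : 0 < ρmin)
    (ρ : Fin d → ℝ) (hρ : ∀ i, ρmin ≤ ρ i ∧ ρ i ≤ ρbar)
    (L : EuclideanSpace ℝ (Fin d) →ₗ[ℝ] EuclideanSpace ℝ (Fin d))
    (hLsa : ∀ v w, ⟪L v, w⟫ = ⟪v, L w⟫)
    (hLbnd : ∀ w, w ≠ 0 → 0 < -⟪L w, w⟫ ∧
      -⟪L w, w⟫ < 4 * (∑ k, (a k) ^ 2 / (h k) ^ 2) * ⟪w, w⟫)
    (Minv : EuclideanSpace ℝ (Fin d) →ₗ[ℝ] EuclideanSpace ℝ (Fin d))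
    (hMinv : ∀ (w : EuclideanSpace ℝ (Fin d)) (i : Fin d), Minv w i = w i / ρ i)
    (hCFL : (1 / 3) * ht ^ 2 * (∑ k, (a k) ^ 2 / (h k) ^ 2) ≤ (1 - ε) * ρmin)
    (Iρh : EuclideanSpace ℝ (Fin d) →ₗ[ℝ] EuclideanSpace ℝ (Fin d))
    (hIρh : Iρh = Minv + (ht ^ 2 / 12) • (Minv ∘ₗ L ∘ₗ Minv)) :
    (∀ v w, ⟪Iρh v, w⟫ = ⟪v, Iρh w⟫) ∧
    ∀ w, w ≠ 0 →
      ε * (1 / ρbar) * ⟪w, w⟫ ≤ ε * ⟪Minv w, w⟫ ∧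
      ε * ⟪Minv w, w⟫ < ⟪Iρh w, w⟫ ∧
      ⟪Iρh w, w⟫ < ⟪Minv w, w⟫ ∧
      ⟪Minv w, w⟫ ≤ (1 / ρmin) * ⟪w, w⟫ :=
  stmt_5_general d n a h ht ε ρmin ρbar hht hε0 hρmin ρ hρ L hLsa hLbnd Minv hMinv hCFL Iρh hIρh
end

section
/- Under the hypotheses of the abstract three-level scheme stability lemma (B = B* > 0, A = A* > 0, (1/4)h_t² A ≤ (1-ε₀²)B, equations B Λ_t v + A v = φ on interior levels and B(δ_t v)⁰ + (h_t/2) A v⁰ = u⁽¹⁾ + (h_t/2)φ⁰), the discrete time derivative satisfies ε₀ max_{1≤m≤M} ‖A^{-1/2} B δ̄_t v^m‖ ≤ (1+ε₀)‖v⁰‖_B + (3+2ε₀)(‖A^{-1/2} u⁽¹⁾‖ + ‖A^{-1/2} φ‖_{L̃¹}), where δ̄_t v^m = (v^m - v^{m-1})/h_t. -/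
open RealInnerProductSpace

set_option maxHeartbeats 1000000 in
/-- under the hypotheses of the abstract three-level scheme
stability lemma, the discrete time derivative satisfies
`ε₀ max_{1≤m≤M} ‖A^{-1/2} B δ̄_t v^m‖ ≤ (1+ε₀)‖v⁰‖_B + (3+2ε₀)(‖A^{-1/2} u⁽¹⁾‖ + ‖A^{-1/2} φ‖_{L̃¹})`.
Here `Rinv` plays the role of `A^{-1/2}`; the already-proved bound of the
first part of the lemma is assumed as given. -/
theorem stmt_9 {H : Type*} [NormedAddCommGroup H] [InnerProductSpace ℝ H]
    [FiniteDimensional ℝ H]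
    (ht ε₀ : ℝ) (hht : 0 < ht) (hε₀ : 0 < ε₀) (hε₀1 : ε₀ < 1)
    (M : ℕ) (hM : 2 ≤ M)
    (B A : H →ₗ[ℝ] H)
    (hBsa : ∀ v w : H, ⟪B v, w⟫ = ⟪v, B w⟫)
    (hBpos : ∀ w : H, w ≠ 0 → 0 < ⟪B w, w⟫)
    (hAsa : ∀ v w : H, ⟪A v, w⟫ = ⟪v, A w⟫)
    (hApos : ∀ w : H, w ≠ 0 → 0 < ⟪A w, w⟫)
    (hstab : ∀ w : H, (1 / 4) * ht ^ 2 * ⟪A w, w⟫ ≤ (1 - ε₀ ^ 2) * ⟪B w, w⟫)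
    (Rinv : H →ₗ[ℝ] H)
    (hRsa : ∀ v w : H, ⟪Rinv v, w⟫ = ⟪v, Rinv w⟫)
    (hRinv : ∀ w : H, A (Rinv (Rinv w)) = w)
    (v φ : ℕ → H) (u1 : H)
    (hscheme : ∀ m, 1 ≤ m → m ≤ M - 1 →
      B ((ht ^ 2)⁻¹ • (v (m + 1) - (2 : ℝ) • v m + v (m - 1))) + A (v m) = φ m)
    (hinit : B (ht⁻¹ • (v 1 - v 0)) + (ht / 2) • A (v 0) = u1 + (ht / 2) • φ 0)
    (hbound : ∀ m ≤ M,
      max (ε₀ * Real.sqrt ⟪B (v m), v m⟫)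
          (Real.sqrt ⟪A (ht • ∑ l ∈ Finset.Icc 1 m, ((1 : ℝ) / 2) • (v l + v (l - 1))),
            ht • ∑ l ∈ Finset.Icc 1 m, ((1 : ℝ) / 2) • (v l + v (l - 1))⟫)
      ≤ Real.sqrt ⟪B (v 0), v 0⟫ + 2 * ‖Rinv u1‖
        + 2 * ((ht / 2) * ‖Rinv (φ 0)‖ + ht * ∑ l ∈ Finset.Icc 1 (M - 1), ‖Rinv (φ l)‖)) :
    ∀ m, 1 ≤ m → m ≤ M →
      ε₀ * ‖Rinv (B (ht⁻¹ • (v m - v (m - 1))))‖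
      ≤ (1 + ε₀) * Real.sqrt ⟪B (v 0), v 0⟫
        + (3 + 2 * ε₀) * (‖Rinv u1‖
          + ((ht / 2) * ‖Rinv (φ 0)‖ + ht * ∑ l ∈ Finset.Icc 1 (M - 1), ‖Rinv (φ l)‖)) := by
  have htne : ht ≠ 0 := ne_of_gt hht
  -- nonnegativity of the quadratic forms
  have hA0 : ∀ w : H, 0 ≤ ⟪A w, w⟫ := by
    intro w
    rcases eq_or_ne w 0 with h | h
    · simp [h]
    · exact (hApos w h).le
  have hB0 : ∀ w : H, 0 ≤ ⟪B w, w⟫ := by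
    intro w
    rcases eq_or_ne w 0 with h | h
    · simp [h]
    · exact (hBpos w h).le
  -- A is injective
  have hAinj : ∀ w : H, A w = 0 → w = 0 := by
    intro w hw
    by_contra h
    have := hApos w h
    rw [hw] at this
    simp at this
  -- Rinv ∘ Rinv ∘ A = id
  have hDD : ∀ w : H, Rinv (Rinv (A w)) = w := by
    intro w
    have h1 : A (Rinv (Rinv (A w)) - w) = 0 := by
      rw [map_sub, hRinv]; simp
    have := hAinj _ h1
    rwa [sub_eq_zero] at this
  -- norm of Rinv (A w)
  have hnormDA : ∀ w : H, ‖Rinv (A w)‖ = Real.sqrt ⟪A w, w⟫ := by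
    intro w
    have h1 : ⟪Rinv (A w), Rinv (A w)⟫ = ⟪A w, w⟫ := by
      rw [hRsa, hDD]
    rw [← h1, real_inner_self_eq_norm_sq, Real.sqrt_sq (norm_nonneg _)]
  -- telescoped form of the scheme
  have key : ∀ n : ℕ, n + 1 ≤ M →
      B (ht⁻¹ • (v (n + 1) - v n)) =
        u1 + (ht / 2) • φ 0 - (ht / 2) • A (v 0)
          + ∑ l ∈ Finset.Icc 1 n, (ht • φ l - ht • A (v l)) := by
    intro n
    induction n with
    | zero =>
      intro _
      have h1 : B (ht⁻¹ • (v 1 - v 0)) = u1 + (ht / 2) • φ 0 - (ht / 2) • A (v 0) := by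
        rw [eq_sub_iff_add_eq]; exact hinit
      simp [h1]
    | succ p ih =>
      intro hle
      have ihp := ih (by omega)
      have hs := hscheme (p + 1) (by omega) (by omega)
      simp only [Nat.add_sub_cancel] at hs
      have hs' : B ((ht ^ 2)⁻¹ • (v (p + 1 + 1) - (2 : ℝ) • v (p + 1) + v p)) =
          φ (p + 1) - A (v (p + 1)) := by
        rw [eq_sub_iff_add_eq]; exact hs
      have e1 : ht⁻¹ • (v (p + 1 + 1) - v (p + 1)) =
          ht⁻¹ • (v (p + 1) - v p)
            + ht • ((ht ^ 2)⁻¹ • (v (p + 1 + 1) - (2 : ℝ) • v (p + 1) + v p)) := by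
        match_scalars <;> field_simp <;> ring
      have step : B (ht⁻¹ • (v (p + 1 + 1) - v (p + 1))) =
          B (ht⁻¹ • (v (p + 1) - v p)) + (ht • φ (p + 1) - ht • A (v (p + 1))) := by
        calc B (ht⁻¹ • (v (p + 1 + 1) - v (p + 1)))
            = B (ht⁻¹ • (v (p + 1) - v p))
                + ht • B ((ht ^ 2)⁻¹ • (v (p + 1 + 1) - (2 : ℝ) • v (p + 1) + v p)) := by
              rw [e1]; simp only [map_add, map_smul]
          _ = B (ht⁻¹ • (v (p + 1) - v p)) + (ht • φ (p + 1) - ht • A (v (p + 1))) := by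
              rw [hs']; module
      rw [step, ihp, Finset.sum_Icc_succ_top (by omega : 1 ≤ p + 1)]
      abel
  -- the trapezoidal sum identity
  have trap : ∀ k : ℕ,
      (ht / 2) • v 0 + (∑ l ∈ Finset.Icc 1 k, ht • v l) =
        ht • (∑ l ∈ Finset.Icc 1 k, ((1 : ℝ) / 2) • (v l + v (l - 1))) + (ht / 2) • v k := by
    intro k
    induction k with
    | zero => simp
    | succ p ih =>
      rw [Finset.sum_Icc_succ_top (by omega : 1 ≤ p + 1),
        Finset.sum_Icc_succ_top (by omega : 1 ≤ p + 1)]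
      simp only [Nat.add_sub_cancel]
      rw [smul_add, ← add_assoc, ih]
      match_scalars <;> ring
  -- specialize to our m
  intro m hm1 hmM
  obtain ⟨n, rfl⟩ : ∃ n, m = n + 1 := ⟨m - 1, by omega⟩
  simp only [Nat.add_sub_cancel]
  have hk := key n (by omega)
  have hA' : (ht / 2) • A (v 0) + ∑ l ∈ Finset.Icc 1 n, ht • A (v l) =
      A (ht • (∑ l ∈ Finset.Icc 1 n, ((1 : ℝ) / 2) • (v l + v (l - 1))))
        + (ht / 2) • A (v n) := by
    calc (ht / 2) • A (v 0) + ∑ l ∈ Finset.Icc 1 n, ht • A (v l)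
        = A ((ht / 2) • v 0 + ∑ l ∈ Finset.Icc 1 n, ht • v l) := by
          rw [map_add, map_smul, map_sum]
          congr 1
          exact Finset.sum_congr rfl fun l _ => (map_smul A ht (v l)).symm
      _ = A (ht • (∑ l ∈ Finset.Icc 1 n, ((1 : ℝ) / 2) • (v l + v (l - 1)))
            + (ht / 2) • v n) := by rw [trap n]
      _ = A (ht • (∑ l ∈ Finset.Icc 1 n, ((1 : ℝ) / 2) • (v l + v (l - 1))))
            + (ht / 2) • A (v n) := by rw [map_add, map_smul, map_smul]
  have hk2 : B (ht⁻¹ • (v (n + 1) - v n)) =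
      u1 + (ht / 2) • φ 0 + (∑ l ∈ Finset.Icc 1 n, ht • φ l)
        - A (ht • (∑ l ∈ Finset.Icc 1 n, ((1 : ℝ) / 2) • (v l + v (l - 1))))
        - (ht / 2) • A (v n) := by
    rw [hk, Finset.sum_sub_distrib, sub_sub, ← hA']
    abel
  set S : H := ht • (∑ l ∈ Finset.Icc 1 n, ((1 : ℝ) / 2) • (v l + v (l - 1))) with hS
  -- apply Rinv
  have hg : Rinv (B (ht⁻¹ • (v (n + 1) - v n))) =
      Rinv u1 + (ht / 2) • Rinv (φ 0) + (∑ l ∈ Finset.Icc 1 n, ht • Rinv (φ l))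
        - Rinv (A S) - (ht / 2) • Rinv (A (v n)) := by
    rw [hk2]
    simp only [map_sub, map_add, map_smul, map_sum]
  -- triangle inequality
  have tri : ‖Rinv (B (ht⁻¹ • (v (n + 1) - v n)))‖ ≤
      ‖Rinv u1‖ + (ht / 2) * ‖Rinv (φ 0)‖ + (ht * ∑ l ∈ Finset.Icc 1 n, ‖Rinv (φ l)‖)
        + ‖Rinv (A S)‖ + (ht / 2) * ‖Rinv (A (v n))‖ := by
    rw [hg]
    have h1 : ‖(∑ l ∈ Finset.Icc 1 n, ht • Rinv (φ l))‖ ≤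
        ht * ∑ l ∈ Finset.Icc 1 n, ‖Rinv (φ l)‖ := by
      calc ‖(∑ l ∈ Finset.Icc 1 n, ht • Rinv (φ l))‖
          ≤ ∑ l ∈ Finset.Icc 1 n, ‖ht • Rinv (φ l)‖ := norm_sum_le _ _
        _ = ht * ∑ l ∈ Finset.Icc 1 n, ‖Rinv (φ l)‖ := by
            rw [Finset.mul_sum]
            exact Finset.sum_congr rfl fun l _ => by
              rw [norm_smul, Real.norm_eq_abs, abs_of_pos hht]
    have h2 : ‖(ht / 2) • Rinv (φ 0)‖ = (ht / 2) * ‖Rinv (φ 0)‖ := by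
      rw [norm_smul, Real.norm_eq_abs, abs_of_pos (by linarith)]
    have h3 : ‖(ht / 2) • Rinv (A (v n))‖ = (ht / 2) * ‖Rinv (A (v n))‖ := by
      rw [norm_smul, Real.norm_eq_abs, abs_of_pos (by linarith)]
    calc ‖Rinv u1 + (ht / 2) • Rinv (φ 0) + (∑ l ∈ Finset.Icc 1 n, ht • Rinv (φ l))
            - Rinv (A S) - (ht / 2) • Rinv (A (v n))‖
        ≤ ‖Rinv u1 + (ht / 2) • Rinv (φ 0) + (∑ l ∈ Finset.Icc 1 n, ht • Rinv (φ l))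
            - Rinv (A S)‖ + ‖(ht / 2) • Rinv (A (v n))‖ := norm_sub_le _ _
      _ ≤ ‖Rinv u1 + (ht / 2) • Rinv (φ 0) + (∑ l ∈ Finset.Icc 1 n, ht • Rinv (φ l))‖
            + ‖Rinv (A S)‖ + ‖(ht / 2) • Rinv (A (v n))‖ := by
          gcongr
          exact norm_sub_le _ _
      _ ≤ ‖Rinv u1 + (ht / 2) • Rinv (φ 0)‖ + ‖(∑ l ∈ Finset.Icc 1 n, ht • Rinv (φ l))‖
            + ‖Rinv (A S)‖ + ‖(ht / 2) • Rinv (A (v n))‖ := by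
          gcongr
          exact norm_add_le _ _
      _ ≤ ‖Rinv u1‖ + ‖(ht / 2) • Rinv (φ 0)‖ + ‖(∑ l ∈ Finset.Icc 1 n, ht • Rinv (φ l))‖
            + ‖Rinv (A S)‖ + ‖(ht / 2) • Rinv (A (v n))‖ := by
          gcongr
          exact norm_add_le _ _
      _ ≤ ‖Rinv u1‖ + (ht / 2) * ‖Rinv (φ 0)‖ + (ht * ∑ l ∈ Finset.Icc 1 n, ‖Rinv (φ l)‖)
            + ‖Rinv (A S)‖ + (ht / 2) * ‖Rinv (A (v n))‖ := by
          rw [h2, h3]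
          gcongr
  -- extend the sum of φ-norms from n to M-1
  have hsum : (∑ l ∈ Finset.Icc 1 n, ‖Rinv (φ l)‖) ≤
      ∑ l ∈ Finset.Icc 1 (M - 1), ‖Rinv (φ l)‖ := by
    apply Finset.sum_le_sum_of_subset_of_nonneg
    · apply Finset.Icc_subset_Icc_right; omega
    · intro l _ _; exact norm_nonneg _
  -- bounds from hbound at level n
  have hb := hbound n (by omega)
  have hbS : Real.sqrt ⟪A S, S⟫ ≤
      Real.sqrt ⟪B (v 0), v 0⟫ + 2 * ‖Rinv u1‖
        + 2 * ((ht / 2) * ‖Rinv (φ 0)‖ + ht * ∑ l ∈ Finset.Icc 1 (M - 1), ‖Rinv (φ l)‖) := by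
    rw [hS]; exact le_trans (le_max_right _ _) hb
  have hbB : ε₀ * Real.sqrt ⟪B (v n), v n⟫ ≤
      Real.sqrt ⟪B (v 0), v 0⟫ + 2 * ‖Rinv u1‖
        + 2 * ((ht / 2) * ‖Rinv (φ 0)‖ + ht * ∑ l ∈ Finset.Icc 1 (M - 1), ‖Rinv (φ l)‖) :=
    le_trans (le_max_left _ _) hb
  -- stability bound: (ht/2)√⟪A vⁿ,vⁿ⟫ ≤ √⟪B vⁿ,vⁿ⟫
  have hstabn : (ht / 2) * Real.sqrt ⟪A (v n), v n⟫ ≤ Real.sqrt ⟪B (v n), v n⟫ := by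
    have h1 : (ht / 2) * Real.sqrt ⟪A (v n), v n⟫ =
        Real.sqrt ((ht / 2) ^ 2 * ⟪A (v n), v n⟫) := by
      rw [Real.sqrt_mul (sq_nonneg _), Real.sqrt_sq (by linarith)]
    rw [h1]
    apply Real.sqrt_le_sqrt
    nlinarith [hstab (v n), hB0 (v n), sq_nonneg ε₀]
  -- norms of the A-terms
  have hnS : ‖Rinv (A S)‖ = Real.sqrt ⟪A S, S⟫ := hnormDA S
  have hnv : ‖Rinv (A (v n))‖ = Real.sqrt ⟪A (v n), v n⟫ := hnormDA (v n)
  -- assemble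
  have sumnn : (0 : ℝ) ≤ ∑ l ∈ Finset.Icc 1 (M - 1), ‖Rinv (φ l)‖ :=
    Finset.sum_nonneg fun l _ => norm_nonneg _
  have hP0 : (0 : ℝ) ≤ ‖Rinv u1‖ + ((ht / 2) * ‖Rinv (φ 0)‖
      + ht * ∑ l ∈ Finset.Icc 1 (M - 1), ‖Rinv (φ l)‖) := by
    have h1 := norm_nonneg (Rinv u1)
    have h2 := norm_nonneg (Rinv (φ 0))
    nlinarith
  have h0B : (0 : ℝ) ≤ Real.sqrt ⟪B (v 0), v 0⟫ := Real.sqrt_nonneg _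
  have hgle : ‖Rinv (B (ht⁻¹ • (v (n + 1) - v n)))‖ ≤
      (‖Rinv u1‖ + ((ht / 2) * ‖Rinv (φ 0)‖
        + ht * ∑ l ∈ Finset.Icc 1 (M - 1), ‖Rinv (φ l)‖))
      + Real.sqrt ⟪A S, S⟫ + (ht / 2) * Real.sqrt ⟪A (v n), v n⟫ := by
    rw [← hnS, ← hnv]
    have : ht * (∑ l ∈ Finset.Icc 1 n, ‖Rinv (φ l)‖) ≤
        ht * ∑ l ∈ Finset.Icc 1 (M - 1), ‖Rinv (φ l)‖ :=
      mul_le_mul_of_nonneg_left hsum hht.le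
    linarith [tri]
  have hmul := mul_le_mul_of_nonneg_left hgle hε₀.le
  have hmul2 := mul_le_mul_of_nonneg_left hbS hε₀.le
  have hmul3 := mul_le_mul_of_nonneg_left hstabn hε₀.le
  nlinarith [hmul, hmul2, hmul3, hbB, hP0, h0B, hε₀, hε₀1,
    mul_nonneg (sub_nonneg.mpr hε₀1.le) hP0]
end

section
/- Error transfer for the auxiliary unknowns: if r_{kk} = s^{-1}(Λ r + ψ) where s = I + (h²/12)Λ with -Λ = -Λ* > 0 satisfying 4/X² I < -Λ < 4/h² I, then ‖(-Λ)^{-1/2} r_{kk}‖ ≤ (3/2)(‖(-Λ)^{1/2} r‖ + (X/2)‖ψ‖). -/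
open RealInnerProductSpace

/-- error transfer for the auxiliary unknowns: if
`r_{kk} = s⁻¹(Λ r + ψ)` with `s = I + (h²/12)Λ`, `(4/X²)I < -Λ < (4/h²)I`, then
`‖(-Λ)^{-1/2} r_{kk}‖ ≤ (3/2)(‖(-Λ)^{1/2} r‖ + (X/2)‖ψ‖)`.  Here `P` is the
positive square root of `-Λ` and `Pinv` its inverse. -/
theorem stmt_16 {H : Type*} [NormedAddCommGroup H] [InnerProductSpace ℝ H]
    [FiniteDimensional ℝ H]
    (X h : ℝ) (hh : 0 < h) (hX : h < X)
    (Lam : H →ₗ[ℝ] H)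
    (hLsa : ∀ v w : H, ⟪Lam v, w⟫ = ⟪v, Lam w⟫)
    (hLbnd : ∀ w : H, w ≠ 0 →
      (4 / X ^ 2) * ⟪w, w⟫ < -⟪Lam w, w⟫ ∧ -⟪Lam w, w⟫ < (4 / h ^ 2) * ⟪w, w⟫)
    (s sinv : H →ₗ[ℝ] H) (hs : s = LinearMap.id + (h ^ 2 / 12) • Lam)
    (hsinv1 : sinv ∘ₗ s = LinearMap.id) (hsinv2 : s ∘ₗ sinv = LinearMap.id)
    (P Pinv : H →ₗ[ℝ] H)
    (hPsa : ∀ v w : H, ⟪P v, w⟫ = ⟪v, P w⟫)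
    (hPpos : ∀ w : H, 0 ≤ ⟪P w, w⟫)
    (hPP : ∀ w : H, P (P w) = -(Lam w))
    (hPinv1 : Pinv ∘ₗ P = LinearMap.id) (hPinv2 : P ∘ₗ Pinv = LinearMap.id)
    (r ψ rkk : H) (hrkk : rkk = sinv (Lam r + ψ)) :
    ‖Pinv rkk‖ ≤ (3 / 2) * (‖P r‖ + (X / 2) * ‖ψ‖) := by
  have hX0 : 0 < X := hh.trans hX
  have hsinv1' : ∀ w : H, sinv (s w) = w := fun w =>
    congrFun (congrArg DFunLike.coe hsinv1) w
  have hsinv2' : ∀ w : H, s (sinv w) = w := fun w =>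
    congrFun (congrArg DFunLike.coe hsinv2) w
  have hPinv1' : ∀ w : H, Pinv (P w) = w := fun w =>
    congrFun (congrArg DFunLike.coe hPinv1) w
  have hPinv2' : ∀ w : H, P (Pinv w) = w := fun w =>
    congrFun (congrArg DFunLike.coe hPinv2) w
  -- P commutes with Lam
  have hPL : ∀ w : H, P (Lam w) = Lam (P w) := by
    intro w
    have h1 : P (P (P w)) = -(Lam (P w)) := hPP (P w)
    have h2 : P (P (P w)) = -(P (Lam w)) := by
      rw [hPP w, map_neg]
    have := h1.symm.trans h2
    exact (neg_injective this).symm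
  -- P commutes with s
  have hPs : ∀ w : H, P (s w) = s (P w) := by
    intro w
    simp [hs, map_add, map_smul, hPL w]
  -- sinv commutes with P
  have hsP : ∀ w : H, sinv (P w) = P (sinv w) := by
    intro w
    conv_lhs => rw [← hsinv2' w, hPs (sinv w), hsinv1']
  -- Pinv commutes with sinv
  have hPisinv : ∀ w : H, Pinv (sinv w) = sinv (Pinv w) := by
    intro w
    conv_lhs => rw [← hPinv2' w, hsP (Pinv w), hPinv1']
  -- norm bound for sinv
  have hsinv_norm : ∀ v : H, ‖sinv v‖ ≤ (3 / 2) * ‖v‖ := by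
    intro v
    set w := sinv v with hw
    by_cases hw0 : w = 0
    · rw [hw0, norm_zero]
      positivity
    · have hb := (hLbnd w hw0).2
      have hww : ⟪w, w⟫ = ‖w‖ ^ 2 := real_inner_self_eq_norm_sq w
      have hsw : s w = v := hsinv2' v
      have hswlow : (2 / 3) * ‖w‖ ^ 2 ≤ ⟪s w, w⟫ := by
        have : ⟪s w, w⟫ = ‖w‖ ^ 2 + (h ^ 2 / 12) * ⟪Lam w, w⟫ := by
          simp [hs, inner_add_left, real_inner_smul_left, hww]
        rw [this]
        have hh2 : (0:ℝ) < h ^ 2 := by positivity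
        rw [hww] at hb
        have : -((4 / h ^ 2) * ‖w‖ ^ 2) < ⟪Lam w, w⟫ := by linarith
        have key : -(h ^ 2 / 12) * ((4 / h ^ 2) * ‖w‖ ^ 2) ≤ (h ^ 2 / 12) * ⟪Lam w, w⟫ := by
          nlinarith
        have hsimp : -(h ^ 2 / 12) * ((4 / h ^ 2) * ‖w‖ ^ 2) = -(1/3) * ‖w‖ ^ 2 := by
          field_simp; ring
        nlinarith
      have hcs : ⟪s w, w⟫ ≤ ‖v‖ * ‖w‖ := by
        rw [hsw]; exact real_inner_le_norm v w
      have hwpos : 0 < ‖w‖ := norm_pos_iff.mpr hw0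
      nlinarith
  -- norm bound for Pinv
  have hPinv_norm : ∀ v : H, ‖Pinv v‖ ≤ (X / 2) * ‖v‖ := by
    intro v
    set w := Pinv v with hw
    by_cases hw0 : w = 0
    · rw [hw0, norm_zero]
      positivity
    · have hb := (hLbnd w hw0).1
      have hww : ⟪w, w⟫ = ‖w‖ ^ 2 := real_inner_self_eq_norm_sq w
      have hPw : P w = v := hPinv2' v
      have key : ‖v‖ ^ 2 = -⟪Lam w, w⟫ := by
        rw [← hPw, ← real_inner_self_eq_norm_sq, hPsa w (P w), hPP w,
          inner_neg_right, real_inner_comm]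
      rw [hww] at hb
      have hwpos : 0 < ‖w‖ := norm_pos_iff.mpr hw0
      have hvw : (4 / X ^ 2) * ‖w‖ ^ 2 < ‖v‖ ^ 2 := by rw [key]; exact hb
      have hX2 : (0:ℝ) < X ^ 2 := by positivity
      have h1 : ‖w‖ ^ 2 < (X / 2 * ‖v‖) ^ 2 := by
        have he : (X / 2 * ‖v‖) ^ 2 = X ^ 2 / 4 * ‖v‖ ^ 2 := by ring
        rw [he]
        calc ‖w‖ ^ 2 = X ^ 2 / 4 * ((4 / X ^ 2) * ‖w‖ ^ 2) := by field_simp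
          _ < X ^ 2 / 4 * ‖v‖ ^ 2 := by
              exact mul_lt_mul_of_pos_left hvw (by positivity)
      exact (lt_of_pow_lt_pow_left₀ 2 (by positivity) h1).le
  -- main computation
  have hdecomp : Pinv rkk = -(sinv (P r)) + sinv (Pinv ψ) := by
    rw [hrkk, hPisinv, map_add]
    have hLr : Lam r = -(P (P r)) := by rw [hPP r, neg_neg]
    have hPL : Pinv (Lam r) = -(P r) := by rw [hLr, map_neg, hPinv1']
    rw [hPL, map_add, map_neg]
  rw [hdecomp]
  calc ‖-(sinv (P r)) + sinv (Pinv ψ)‖ ≤ ‖sinv (P r)‖ + ‖sinv (Pinv ψ)‖ := by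
        simpa using norm_add_le (-(sinv (P r))) (sinv (Pinv ψ))
    _ ≤ (3/2) * ‖P r‖ + (3/2) * ‖Pinv ψ‖ := add_le_add (hsinv_norm _) (hsinv_norm _)
    _ ≤ (3/2) * ‖P r‖ + (3/2) * ((X/2) * ‖ψ‖) := by
        have := hPinv_norm ψ
        nlinarith
    _ = (3 / 2) * (‖P r‖ + (X / 2) * ‖ψ‖) := by ring
end
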